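/- arXiv:2406.00871 — 4 statements merged into one kernel-verified Lean document; each statement's English description precedes it below -/
import Mathlib

section
/- Suppose two Laguerre tessellations {Lag_i(X,w)}_{i=1}^n and {Lag_i(Y,v)}_{i=1}^n of Ω (with pairwise distinct seeds X and Y respectively) have cells with the same positive volumes and the same centroids: vol(Lag_i(X,w)) = vol(Lag_i(Y,v)) > 0 and σ(Lag_i(X,w)) = σ(Lag_i(Y,v)) for all i. Then Lag_i(X,w) = Lag_i(Y,v) up to Lebesgue-null sets, for all i. In other words, a Laguerre tessellation is uniquely determined by the volumes and centroids of its cells. -/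
/-!
Put `aᵢ(p) = ‖p‖² - (‖p - xᵢ‖² - wᵢ) = 2⟪xᵢ, p⟫ - ‖xᵢ‖² + wᵢ`, an affine function of `p`.
The Laguerre cell `Cᵢ` of `(X, w)` is where `aᵢ` is the largest of the `aⱼ`, so
`∑ᵢ ∫_{Cᵢ} aᵢ = ∫ maxⱼ aⱼ`, whereas for any other a.e. partition `(Dᵢ)` of `Ω`
only `∑ᵢ ∫_{Dᵢ} aᵢ ≤ ∫ maxⱼ aⱼ` holds, with equality only if `aᵢ = maxⱼ aⱼ` a.e. on each `Dᵢ`.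
Since `∫_A aᵢ` depends on `A` only through its volume and its first moment, the Laguerre
cells `Dᵢ` of `(Y, v)` give equality. Hence `Dᵢ ⊆ Cᵢ` a.e., and equal volumes make this
an a.e. equality.
-/

open Set MeasureTheory RealInnerProductSpace

section AEPartition

variable {α ι : Type*} [MeasurableSpace α] {ν : Measure α}

structure IsAEPartition (ν : Measure α) (D : ι → Set α) : Prop where
  nullMeasurableSet : ∀ k, NullMeasurableSet (D k) ν
  pairwise_aedisjoint : Pairwise fun k l => AEDisjoint ν (D k) (D l)
  iUnion_eq_univ : ⋃ k, D k = univ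

variable [Fintype ι]

theorem IsAEPartition.integral_eq_sum {F : Type*} [NormedAddCommGroup F] [NormedSpace ℝ F]
    {D : ι → Set α} (hD : IsAEPartition ν D) {g : α → F} (hg : Integrable g ν) :
    ∫ p, g p ∂ν = ∑ k, ∫ p in D k, g p ∂ν := by
  rw [← setIntegral_univ, ← hD.iUnion_eq_univ,
    integral_iUnion_ae hD.nullMeasurableSet hD.pairwise_aedisjoint hg.integrableOn, tsum_fintype]

variable [Nonempty ι] {f : ι → α → ℝ}

theorem integrable_univ_sup' (hf : ∀ k, Integrable (f k) ν) :
    Integrable (Finset.univ.sup' Finset.univ_nonempty f) ν :=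
  Finset.sup'_induction (p := fun g => Integrable g ν) _ _ (fun _ h₁ _ h₂ => h₁.sup h₂)
    fun k _ => hf k

theorem IsAEPartition.integral_univ_sup'_eq_sum {C : ι → Set α} (hC : IsAEPartition ν C)
    (hf : ∀ k, Integrable (f k) ν) (hmax : ∀ k, ∀ p ∈ C k, ∀ j, f j p ≤ f k p) :
    ∫ p, Finset.univ.sup' Finset.univ_nonempty f p ∂ν = ∑ k, ∫ p in C k, f k p ∂ν := by
  rw [hC.integral_eq_sum (integrable_univ_sup' hf)]
  refine Finset.sum_congr rfl fun k _ => setIntegral_congr_fun₀ (hC.nullMeasurableSet k)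
    fun p hp => ?_
  rw [Finset.sup'_apply]
  exact le_antisymm (Finset.sup'_le _ _ fun j _ => hmax k p hp j)
    (Finset.le_sup' (fun j => f j p) (Finset.mem_univ k))

theorem IsAEPartition.ae_subset_of_integral_univ_sup'_le {D : ι → Set α}
    (hD : IsAEPartition ν D) (hf : ∀ k, Integrable (f k) ν)
    (h : ∫ p, Finset.univ.sup' Finset.univ_nonempty f p ∂ν ≤ ∑ k, ∫ p in D k, f k p ∂ν)
    (k : ι) : D k ≤ᵐ[ν] {p | ∀ j, f j p ≤ f k p} := by
  set M := Finset.univ.sup' Finset.univ_nonempty f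
  have hM : Integrable M ν := integrable_univ_sup' hf
  have hle : ∀ j p, f j p ≤ M p := fun j => Finset.le_sup' f (Finset.mem_univ j)
  have hgap : ∀ j, 0 ≤ ∫ p in D j, (M p - f j p) ∂ν := fun j =>
    integral_nonneg fun p => sub_nonneg.2 (hle j p)
  have hsum : ∑ j, ∫ p in D j, (M p - f j p) ∂ν = 0 := by
    have hsplit : ∑ j, ∫ p in D j, (M p - f j p) ∂ν
        = ∫ p, M p ∂ν - ∑ j, ∫ p in D j, f j p ∂ν := by
      rw [hD.integral_eq_sum hM, ← Finset.sum_sub_distrib]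
      exact Finset.sum_congr rfl fun j _ => integral_sub hM.integrableOn (hf j).integrableOn
    exact le_antisymm (hsplit ▸ sub_nonpos.2 h) (Finset.sum_nonneg fun j _ => hgap j)
  have hgap_k : ∫ p in D k, (M p - f k p) ∂ν = 0 :=
    (Finset.sum_eq_zero_iff_of_nonneg fun j _ => hgap j).1 hsum k (Finset.mem_univ k)
  have hae : (fun p => M p - f k p) =ᵐ[ν.restrict (D k)] 0 :=
    (integral_eq_zero_iff_of_nonneg (fun p => sub_nonneg.2 (hle k p))
      (hM.sub (hf k)).integrableOn).1 hgap_k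
  filter_upwards [(ae_restrict_iff'₀ (hD.nullMeasurableSet k)).1 hae] with p hp hpD j
  have hMp : M p - f k p = 0 := hp hpD
  linarith [hle j p]

end AEPartition

theorem setIntegral_eq_of_measure_eq_of_setAverage_eq {α F : Type*} [MeasurableSpace α]
    [NormedAddCommGroup F] [NormedSpace ℝ F] {μ : Measure α} {s t : Set α} {f : α → F}
    (hs : μ s ≠ ⊤) (hst : μ s = μ t) (h : ⨍ x in s, f x ∂μ = ⨍ x in t, f x ∂μ) :
    ∫ x in s, f x ∂μ = ∫ x in t, f x ∂μ := by
  rw [setAverage_eq, setAverage_eq, measureReal_def, measureReal_def, ← hst] at h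
  rcases eq_or_ne (μ s) 0 with h0 | h0
  · rw [Measure.restrict_eq_zero.2 h0, Measure.restrict_eq_zero.2 (hst ▸ h0),
      integral_zero_measure]
  · exact smul_right_injective F (inv_ne_zero (ENNReal.toReal_ne_zero.2 ⟨h0, hs⟩)) h

theorem addHaar_setOf_inner_eq {E : Type*} [NormedAddCommGroup E] [InnerProductSpace ℝ E]
    [FiniteDimensional ℝ E] [MeasurableSpace E] [BorelSpace E] (μ : Measure E)
    [μ.IsAddHaarMeasure] {a : E} (ha : a ≠ 0) (b : ℝ) : μ {p | ⟪a, p⟫ = b} = 0 := by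
  let H : AffineSubspace ℝ E := (AffineSubspace.mk' b ⊥).comap (innerSL ℝ a).toAffineMap
  have hH : ∀ p, p ∈ H ↔ ⟪a, p⟫ = b := fun p => by
    simp [H, AffineSubspace.mem_comap, AffineSubspace.mem_mk', sub_eq_zero]
  refine (congrArg μ (Set.ext hH)).symm.trans
    (Measure.addHaar_affineSubspace μ H fun htop => ha ?_)
  have h0 := (hH 0).1 (htop ▸ AffineSubspace.mem_top ℝ E 0)
  have h1 := (hH a).1 (htop ▸ AffineSubspace.mem_top ℝ E a)
  rw [inner_zero_right] at h0
  exact inner_self_eq_zero.1 (h1.trans h0.symm)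

section Laguerre

variable {E ι : Type*} [NormedAddCommGroup E]

def laguerreCell (x : ι → E) (w : ι → ℝ) (i : ι) : Set E :=
  {p | ∀ j, ‖p - x i‖ ^ 2 - w i ≤ ‖p - x j‖ ^ 2 - w j}

theorem isClosed_laguerreCell (x : ι → E) (w : ι → ℝ) (i : ι) :
    IsClosed (laguerreCell x w i) := by
  simp only [laguerreCell, ofPred_forall]
  exact isClosed_iInter fun j => isClosed_le (by fun_prop) (by fun_prop)

theorem measurableSet_laguerreCell [MeasurableSpace E] [OpensMeasurableSpace E] (x : ι → E)
    (w : ι → ℝ) (i : ι) : MeasurableSet (laguerreCell x w i) :=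
  (isClosed_laguerreCell x w i).measurableSet

theorem iUnion_laguerreCell [Finite ι] [Nonempty ι] (x : ι → E) (w : ι → ℝ) :
    ⋃ i, laguerreCell x w i = univ :=
  eq_univ_of_forall fun p =>
    mem_iUnion.2 (Finite.exists_min fun k => ‖p - x k‖ ^ 2 - w k)

variable [InnerProductSpace ℝ E]

def laguerreAffine (x : ι → E) (w : ι → ℝ) (i : ι) (p : E) : ℝ :=
  2 * ⟪x i, p⟫ - ‖x i‖ ^ 2 + w i

theorem mem_laguerreCell_iff {x : ι → E} {w : ι → ℝ} {i : ι} {p : E} :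
    p ∈ laguerreCell x w i ↔ ∀ j, laguerreAffine x w j p ≤ laguerreAffine x w i p := by
  have hexp : ∀ k, laguerreAffine x w k p = ‖p‖ ^ 2 - (‖p - x k‖ ^ 2 - w k) := fun k => by
    rw [laguerreAffine, norm_sub_sq_real, real_inner_comm]
    ring
  simp only [laguerreCell, mem_ofPred_eq, hexp, sub_le_sub_iff_left]

theorem laguerreCell_inter_subset (x : ι → E) (w : ι → ℝ) (i j : ι) :
    laguerreCell x w i ∩ laguerreCell x w j ⊆
      {p | ⟪x j - x i, p⟫ = (‖x j‖ ^ 2 - w j - (‖x i‖ ^ 2 - w i)) / 2} := by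
  rintro p ⟨hi, hj⟩
  have hij := (mem_laguerreCell_iff.1 hi j).antisymm (mem_laguerreCell_iff.1 hj i)
  rw [laguerreAffine, laguerreAffine] at hij
  rw [mem_ofPred_eq, inner_sub_left]
  linarith

theorem isAEPartition_laguerreCell [Fintype ι] [Nonempty ι] [FiniteDimensional ℝ E]
    [MeasurableSpace E] [BorelSpace E] (μ : Measure E) [μ.IsAddHaarMeasure] {ν : Measure E}
    (hν : ν ≪ μ) {x : ι → E} (hx : Function.Injective x) (w : ι → ℝ) :
    IsAEPartition ν (laguerreCell x w) where
  nullMeasurableSet i := (measurableSet_laguerreCell x w i).nullMeasurableSet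
  pairwise_aedisjoint i j hij := hν <| measure_mono_null (laguerreCell_inter_subset x w i j)
    (addHaar_setOf_inner_eq μ (sub_ne_zero.2 (hx.ne hij.symm)) _)
  iUnion_eq_univ := iUnion_laguerreCell x w

theorem setIntegral_laguerreAffine [CompleteSpace E] [MeasurableSpace E] {ν : Measure E}
    {A : Set E} (hA : ν A ≠ ⊤) (hid : IntegrableOn id A ν) (x : ι → E) (w : ι → ℝ) (i : ι) :
    ∫ p in A, laguerreAffine x w i p ∂ν
      = 2 * ⟪x i, ∫ p in A, p ∂ν⟫ + (w i - ‖x i‖ ^ 2) * ν.real A := by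
  have hconst : IntegrableOn (fun _ => w i - ‖x i‖ ^ 2) A ν := integrableOn_const hA
  have hlin : IntegrableOn (fun p => 2 * ⟪x i, p⟫) A ν := (hid.const_inner (x i)).const_mul 2
  simp only [laguerreAffine, sub_add_eq_add_sub, add_sub_assoc]
  rw [integral_add hlin hconst, integral_const_mul,
    integral_inner (𝕜 := ℝ) (f := fun p : E => p) hid, setIntegral_const, smul_eq_mul]
  ring

theorem laguerreCell_ae_eq_of_measure_eq_of_setIntegral_eq [Fintype ι] [Nonempty ι]
    [FiniteDimensional ℝ E] [MeasurableSpace E] [BorelSpace E] (μ : Measure E)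
    [μ.IsAddHaarMeasure] {ν : Measure E} [IsFiniteMeasure ν] (hν : ν ≪ μ)
    (hid : Integrable id ν) {x y : ι → E} (hx : Function.Injective x)
    (hy : Function.Injective y) {w v : ι → ℝ}
    (hvol : ∀ i, ν (laguerreCell x w i) = ν (laguerreCell y v i))
    (hmom : ∀ i, ∫ p in laguerreCell x w i, p ∂ν = ∫ p in laguerreCell y v i, p ∂ν) (i : ι) :
    laguerreCell x w i =ᵐ[ν] laguerreCell y v i := by
  have hX := isAEPartition_laguerreCell μ hν hx w
  have hY := isAEPartition_laguerreCell μ hν hy v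
  have hf : ∀ k, Integrable (laguerreAffine x w k) ν := fun k =>
    (((hid.const_inner (x k)).const_mul 2).sub (integrable_const _)).add (integrable_const _)
  have hsum : ∑ k, ∫ p in laguerreCell x w k, laguerreAffine x w k p ∂ν
      = ∑ k, ∫ p in laguerreCell y v k, laguerreAffine x w k p ∂ν := by
    refine Finset.sum_congr rfl fun k _ => ?_
    rw [setIntegral_laguerreAffine (measure_ne_top _ _) hid.integrableOn,
      setIntegral_laguerreAffine (measure_ne_top _ _) hid.integrableOn, hmom k, measureReal_def,
      measureReal_def, hvol k]
  have hsub : laguerreCell y v i ≤ᵐ[ν] laguerreCell x w i := by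
    have hmax := hY.ae_subset_of_integral_univ_sup'_le hf
      ((hX.integral_univ_sup'_eq_sum hf fun k _ hp => mem_laguerreCell_iff.1 hp).trans_le
        hsum.le) i
    simpa only [← mem_laguerreCell_iff, ofPred_mem_eq] using hmax
  exact (ae_eq_of_ae_subset_of_measure_ge hsub (hvol i).le (hY.nullMeasurableSet i)
    (measure_ne_top ν _)).symm

end Laguerre

theorem laguerre_tessellation_unique_from_volumes_centroids_general {d n : ℕ}
    (Ω : Set (EuclideanSpace ℝ (Fin d)))
    (hbdd : Bornology.IsBounded Ω)
    (x y : Fin n → EuclideanSpace ℝ (Fin d))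
    (hx : Function.Injective x) (hy : Function.Injective y)
    (w v : Fin n → ℝ)
    (LagX LagY : Fin n → Set (EuclideanSpace ℝ (Fin d)))
    (hLagX : ∀ i, LagX i = {p ∈ Ω | ∀ j, ‖p - x i‖ ^ 2 - w i ≤ ‖p - x j‖ ^ 2 - w j})
    (hLagY : ∀ i, LagY i = {p ∈ Ω | ∀ j, ‖p - y i‖ ^ 2 - v i ≤ ‖p - y j‖ ^ 2 - v j})
    (hvol : ∀ i, volume (LagX i) = volume (LagY i))
    (hcent : ∀ i,
      (volume (LagX i)).toReal⁻¹ • (∫ p in LagX i, p)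
        = (volume (LagY i)).toReal⁻¹ • (∫ p in LagY i, p)) :
    ∀ i, volume (symmDiff (LagX i) (LagY i)) = 0 := by
  intro i
  have : Nonempty (Fin n) := ⟨i⟩
  set ν := volume.restrict Ω
  have : IsFiniteMeasure ν := isFiniteMeasure_restrict.2 hbdd.measure_lt_top.ne
  have hXΩ : ∀ k, LagX k = laguerreCell x w k ∩ Ω := fun k => (hLagX k).trans (inter_comm _ _)
  have hYΩ : ∀ k, LagY k = laguerreCell y v k ∩ Ω := fun k => (hLagY k).trans (inter_comm _ _)
  have hvolΩ : ∀ k, ν (laguerreCell x w k) = ν (laguerreCell y v k) := fun k => by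
    rw [Measure.restrict_apply (measurableSet_laguerreCell x w k),
      Measure.restrict_apply (measurableSet_laguerreCell y v k), ← hXΩ, ← hYΩ, hvol]
  have hmom : ∀ k, ∫ p in laguerreCell x w k, p ∂ν = ∫ p in laguerreCell y v k, p ∂ν := by
    intro k
    rw [Measure.restrict_restrict (measurableSet_laguerreCell x w k),
      Measure.restrict_restrict (measurableSet_laguerreCell y v k), ← hXΩ, ← hYΩ]
    refine setIntegral_eq_of_measure_eq_of_setAverage_eq
      (measure_ne_top_of_subset (hXΩ k ▸ inter_subset_right) hbdd.measure_lt_top.ne) (hvol k) ?_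
    simpa only [setAverage_eq, measureReal_def] using hcent k
  have hid : Integrable id ν :=
    (continuous_id.continuousOn.integrableOn_compact hbdd.isCompact_closure).mono_set subset_closure
  have hcell := laguerreCell_ae_eq_of_measure_eq_of_setIntegral_eq volume
    (Measure.absolutelyContinuous_of_le Measure.restrict_le_self) hid hx hy hvolΩ hmom i
  rw [hXΩ, hYΩ, ← inter_symmDiff_distrib_right, ← Measure.restrict_apply
    ((measurableSet_laguerreCell x w i).symmDiff (measurableSet_laguerreCell y v i))]
  exact measure_symmDiff_eq_zero_iff.2 hcell

/-- A Laguerre tessellation is uniquely determined (up to Lebesgue-null sets)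
by the volumes and centroids of its cells. -/
theorem laguerre_tessellation_unique_from_volumes_centroids {d n : ℕ}
    (Ω : Set (EuclideanSpace ℝ (Fin d))) (hne : Ω.Nonempty)
    (hconv : Convex ℝ Ω) (hbdd : Bornology.IsBounded Ω)
    (hcl : closure (interior Ω) = Ω)
    (x y : Fin n → EuclideanSpace ℝ (Fin d))
    (hx : Function.Injective x) (hy : Function.Injective y)
    (w v : Fin n → ℝ)
    (LagX LagY : Fin n → Set (EuclideanSpace ℝ (Fin d)))
    (hLagX : ∀ i, LagX i = {p ∈ Ω | ∀ j, ‖p - x i‖ ^ 2 - w i ≤ ‖p - x j‖ ^ 2 - w j})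
    (hLagY : ∀ i, LagY i = {p ∈ Ω | ∀ j, ‖p - y i‖ ^ 2 - v i ≤ ‖p - y j‖ ^ 2 - v j})
    (hpos : ∀ i, 0 < volume (LagX i))
    (hvol : ∀ i, volume (LagX i) = volume (LagY i))
    (hcent : ∀ i,
      (volume (LagX i)).toReal⁻¹ • (∫ p in LagX i, p)
        = (volume (LagY i)).toReal⁻¹ • (∫ p in LagY i, p)) :
    ∀ i, volume (symmDiff (LagX i) (LagY i)) = 0 :=
  laguerre_tessellation_unique_from_volumes_centroids_general Ω hbdd x y hx hy w v LagX LagY hLagX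
    hLagY hvol hcent
end

section
/- Let T*: Ω → {x_1,...,x_n} be the optimal transport map (for quadratic cost) from Lebesgue measure on Ω to ν = ∑_i v_i δ_{x_i}, and let S: Ω → {x_1,...,x_n} be any admissible map (vol(S^{-1}({x_i})) = v_i for all i) such that the sets S^{-1}({x_i}) have the same centroids as the sets (T*)^{-1}({x_i}) for all i. Then ∫_Ω |x − S(x)|² dx = ∫_Ω |x − T*(x)|² dx, i.e., S is also optimal. -/
open Set MeasureTheory
open scoped RealInnerProductSpace

/-! Expanding `‖p - y‖² = ‖p‖² - 2⟪y, p⟫ + ‖y‖²` on each cell `R ⁻¹' {y}` shows that the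
transport cost of a map with finitely many values depends only on the volumes and the first
moments `∫ p in R ⁻¹' {y}, p` of its cells. Two admissible maps whose cells share volumes and
centroids therefore have the same cost. -/

section Fibers

variable {α β F : Type*} [MeasurableSpace α] [MeasurableSpace β] [MeasurableSingletonClass β]
  [NormedAddCommGroup F] [NormedSpace ℝ F] {μ : Measure α}

theorem integral_eq_sum_setIntegral_fiber {R : α → β} {s : Finset β} {g : α → F}
    (hR : Measurable R) (hRs : ∀ᵐ p ∂μ, R p ∈ s)
    (hg : ∀ y ∈ s, IntegrableOn g (R ⁻¹' {y}) μ) :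
    ∫ p, g p ∂μ = ∑ y ∈ s, ∫ p in R ⁻¹' {y}, g p ∂μ := by
  rw [← integral_biUnion_finset s (fun y _ => hR (measurableSet_singleton y))
    ((pairwiseDisjoint_fiber R _).subset (subset_univ _)) hg,
    Finset.set_biUnion_preimage_singleton,
    Measure.restrict_eq_self_of_ae_mem (s := R ⁻¹' (s : Set β)) hRs]

end Fibers

section Cost

variable {α E : Type*} [MeasurableSpace α] [NormedAddCommGroup E] [InnerProductSpace ℝ E]
  {μ : Measure α} [IsFiniteMeasure μ] {f : α → E}

theorem MeasureTheory.Integrable.norm_sub_const_sq (hf : Integrable f μ)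
    (hf2 : Integrable (fun p => ‖f p‖ ^ 2) μ) (y : E) :
    Integrable (fun p => ‖f p - y‖ ^ 2) μ := by
  simp_rw [norm_sub_sq_real]
  exact (hf2.sub ((hf.inner_const y).const_mul 2)).add (integrable_const _)

variable [CompleteSpace E]

theorem integral_norm_sub_sq (hf : Integrable f μ) (hf2 : Integrable (fun p => ‖f p‖ ^ 2) μ)
    (y : E) :
    ∫ p, ‖f p - y‖ ^ 2 ∂μ
      = ∫ p, ‖f p‖ ^ 2 ∂μ + (μ.real univ * ‖y‖ ^ 2 - 2 * ⟪y, ∫ p, f p ∂μ⟫) := by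
  have hinner : Integrable (fun p => 2 * ⟪f p, y⟫) μ := (hf.inner_const y).const_mul 2
  simp_rw [norm_sub_sq_real]
  rw [integral_add (f := fun p => ‖f p‖ ^ 2 - 2 * ⟪f p, y⟫) (hf2.sub hinner) (integrable_const _),
    integral_sub hf2 hinner, integral_const_mul, integral_const, smul_eq_mul,
    ← integral_inner hf]
  simp_rw [real_inner_comm y]
  ring

variable [MeasurableSpace E] [MeasurableSingletonClass E]

theorem integral_norm_sub_sq_eq_sum_fiber {R : α → E} {s : Finset E}
    (hR : Measurable R) (hRs : ∀ᵐ p ∂μ, R p ∈ s)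
    (hf : Integrable f μ) (hf2 : Integrable (fun p => ‖f p‖ ^ 2) μ) :
    ∫ p, ‖f p - R p‖ ^ 2 ∂μ
      = ∫ p, ‖f p‖ ^ 2 ∂μ
        + ∑ y ∈ s, (μ.real (R ⁻¹' {y}) * ‖y‖ ^ 2 - 2 * ⟪y, ∫ p in R ⁻¹' {y}, f p ∂μ⟫) := by
  have hcell : ∀ y ∈ s, EqOn (fun p => ‖f p - R p‖ ^ 2) (fun p => ‖f p - y‖ ^ 2) (R ⁻¹' {y}) :=
    fun y _ p (hp : R p = y) => by simp only [hp]
  calc ∫ p, ‖f p - R p‖ ^ 2 ∂μ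
      = ∑ y ∈ s, ∫ p in R ⁻¹' {y}, ‖f p - y‖ ^ 2 ∂μ := by
        rw [integral_eq_sum_setIntegral_fiber hR hRs fun y hy =>
          (hf.norm_sub_const_sq hf2 y).integrableOn.congr_fun (hcell y hy).symm
            (hR (measurableSet_singleton y))]
        exact Finset.sum_congr rfl fun y hy =>
          setIntegral_congr_fun (hR (measurableSet_singleton y)) (hcell y hy)
    _ = ∑ y ∈ s, (∫ p in R ⁻¹' {y}, ‖f p‖ ^ 2 ∂μ
          + (μ.real (R ⁻¹' {y}) * ‖y‖ ^ 2 - 2 * ⟪y, ∫ p in R ⁻¹' {y}, f p ∂μ⟫)) :=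
        Finset.sum_congr rfl fun y _ => by
          rw [integral_norm_sub_sq hf.integrableOn hf2.integrableOn,
            measureReal_restrict_apply_univ]
    _ = _ := by
        rw [Finset.sum_add_distrib,
          ← integral_eq_sum_setIntegral_fiber hR hRs fun y _ => hf2.integrableOn]

theorem integral_norm_sub_sq_eq_of_fibers_eq {R R' : α → E} {s : Finset E}
    (hR : Measurable R) (hR' : Measurable R')
    (hRs : ∀ᵐ p ∂μ, R p ∈ s) (hR's : ∀ᵐ p ∂μ, R' p ∈ s)
    (hf : Integrable f μ) (hf2 : Integrable (fun p => ‖f p‖ ^ 2) μ)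
    (hmass : ∀ y ∈ s, μ.real (R ⁻¹' {y}) = μ.real (R' ⁻¹' {y}))
    (hmoment : ∀ y ∈ s, ∫ p in R ⁻¹' {y}, f p ∂μ = ∫ p in R' ⁻¹' {y}, f p ∂μ) :
    ∫ p, ‖f p - R p‖ ^ 2 ∂μ = ∫ p, ‖f p - R' p‖ ^ 2 ∂μ := by
  rw [integral_norm_sub_sq_eq_sum_fiber hR hRs hf hf2,
    integral_norm_sub_sq_eq_sum_fiber hR' hR's hf hf2]
  exact congrArg _ (Finset.sum_congr rfl fun y hy => by rw [hmass y hy, hmoment y hy])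

end Cost

theorem Continuous.integrableOn_of_isBounded {X F : Type*} [MetricSpace X] [ProperSpace X]
    [MeasurableSpace X] [OpensMeasurableSpace X] {μ : Measure X} [IsFiniteMeasureOnCompacts μ]
    [NormedAddCommGroup F] {g : X → F} (hg : Continuous g) {s : Set X}
    (hs : Bornology.IsBounded s) : IntegrableOn g s μ :=
  (hg.continuousOn.integrableOn_compact hs.isCompact_closure).mono_set subset_closure

theorem admissible_map_same_centroids_is_optimal_general {d n : ℕ}
    (Ω : Set (EuclideanSpace ℝ (Fin d)))
    (hconv : Convex ℝ Ω) (hbdd : Bornology.IsBounded Ω)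
    (x : Fin n → EuclideanSpace ℝ (Fin d))
    (v : Fin n → ℝ)
    (T S : EuclideanSpace ℝ (Fin d) → EuclideanSpace ℝ (Fin d))
    (hTmeas : Measurable T) (hSmeas : Measurable S)
    (hTval : ∀ p ∈ Ω, ∃ i, T p = x i) (hSval : ∀ p ∈ Ω, ∃ i, S p = x i)
    (hTadm : ∀ i, (volume (Ω ∩ T ⁻¹' {x i})).toReal = v i)
    (hSadm : ∀ i, (volume (Ω ∩ S ⁻¹' {x i})).toReal = v i)
    (hcent : ∀ i, (∫ p in Ω ∩ S ⁻¹' {x i}, p) = ∫ p in Ω ∩ T ⁻¹' {x i}, p) :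
    (∫ p in Ω, ‖p - S p‖ ^ 2) = ∫ p in Ω, ‖p - T p‖ ^ 2 := by
  have : IsFiniteMeasure (volume.restrict Ω) :=
    isFiniteMeasure_restrict.2 hbdd.measure_lt_top.ne
  have hvals : ∀ R : EuclideanSpace ℝ (Fin d) → EuclideanSpace ℝ (Fin d),
      (∀ p ∈ Ω, ∃ i, R p = x i) → ∀ᵐ p ∂volume.restrict Ω, R p ∈ Finset.univ.image x :=
    fun R hR => (ae_restrict_mem₀ (hconv.nullMeasurableSet (μ := volume))).mono fun p hp => by
      obtain ⟨i, hi⟩ := hR p hp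
      exact Finset.mem_image.2 ⟨i, Finset.mem_univ i, hi.symm⟩
  refine integral_norm_sub_sq_eq_of_fibers_eq hSmeas hTmeas (hvals S hSval) (hvals T hTval)
    (continuous_id.integrableOn_of_isBounded hbdd)
    ((continuous_norm.pow 2).integrableOn_of_isBounded hbdd) ?_ ?_
  all_goals
    rintro _ hy
    obtain ⟨i, -, rfl⟩ := Finset.mem_image.1 hy
  · rw [measureReal_restrict_apply (hSmeas (measurableSet_singleton _)),
      measureReal_restrict_apply (hTmeas (measurableSet_singleton _)),
      inter_comm, measureReal_def, hSadm, inter_comm, measureReal_def, hTadm]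
  · rw [Measure.restrict_restrict (hSmeas (measurableSet_singleton _)),
      Measure.restrict_restrict (hTmeas (measurableSet_singleton _)), inter_comm, hcent,
      inter_comm]

/-- If `S` is an admissible transport map whose preimage cells have the same volumes
and centroids as those of an optimal transport map `T`, then `S` has the same
transport cost as `T`, i.e. `S` is also optimal. -/
theorem admissible_map_same_centroids_is_optimal {d n : ℕ}
    (Ω : Set (EuclideanSpace ℝ (Fin d)))
    (hconv : Convex ℝ Ω) (hbdd : Bornology.IsBounded Ω)
    (hpos : 0 < volume Ω)
    (x : Fin n → EuclideanSpace ℝ (Fin d)) (hx : Function.Injective x)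
    (v : Fin n → ℝ) (hv : ∀ i, 0 < v i) (hsum : ∑ i, v i = (volume Ω).toReal)
    (T S : EuclideanSpace ℝ (Fin d) → EuclideanSpace ℝ (Fin d))
    (hTmeas : Measurable T) (hSmeas : Measurable S)
    (hTval : ∀ p ∈ Ω, ∃ i, T p = x i) (hSval : ∀ p ∈ Ω, ∃ i, S p = x i)
    (hTadm : ∀ i, (volume (Ω ∩ T ⁻¹' {x i})).toReal = v i)
    (hSadm : ∀ i, (volume (Ω ∩ S ⁻¹' {x i})).toReal = v i)
    (hTopt : ∀ R : EuclideanSpace ℝ (Fin d) → EuclideanSpace ℝ (Fin d),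
      Measurable R → (∀ p ∈ Ω, ∃ i, R p = x i) →
      (∀ i, (volume (Ω ∩ R ⁻¹' {x i})).toReal = v i) →
      (∫ p in Ω, ‖p - T p‖ ^ 2) ≤ ∫ p in Ω, ‖p - R p‖ ^ 2)
    (hcent : ∀ i, (∫ p in Ω ∩ S ⁻¹' {x i}, p) = ∫ p in Ω ∩ T ⁻¹' {x i}, p) :
    (∫ p in Ω, ‖p - S p‖ ^ 2) = ∫ p in Ω, ‖p - T p‖ ^ 2 :=
  admissible_map_same_centroids_is_optimal_general Ω hconv hbdd x v T S hTmeas hSmeas hTval hSval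
    hTadm hSadm hcent
end

section
/- Let Ω = [0,l_1] × ⋯ × [0,l_d]. Suppose a Laguerre tessellation of Ω has cells of volumes v_1,...,v_n > 0 and centroids b_1,...,b_n. Then for every i and every coordinate j, v_i l_j / (2 vol(Ω)) ≤ b_i^j ≤ l_j − v_i l_j / (2 vol(Ω)). In particular, dist(b_i, ∂Ω) ≥ min_j v_i l_j / (2 vol(Ω)). -/
/-!
The estimate holds for every compact subset `K` of the box of volume `V`. The slab
`{p ∈ Ω | p j ≤ t}` has volume `A t` with `A = vol Ω / l j`, so `K` has at most volume `A t`
below height `t`. By the layer-cake formula, `∫_K p j` is therefore at least its value when `K`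
fills the slab of width `V / A`, namely `V² / (2A)`; dividing by `V` gives the lower bound, and the
upper bound is the same argument applied to `l j - p j`.
-/

open Set MeasureTheory

section Bathtub

variable {α : Type*} [MeasurableSpace α] {μ : Measure α} {g : α → ℝ} {V A : ℝ}

theorem integral_Ioc_sub_mul_eq (hA : 0 < A) (hV : 0 ≤ V) :
    ∫ t in Ioc 0 (V / A), (V - A * t) = V ^ 2 / (2 * A) := by
  rw [← intervalIntegral.integral_of_le (by positivity), intervalIntegral.integral_sub
    intervalIntegrable_const (intervalIntegral.intervalIntegrable_id.const_mul A),
    intervalIntegral.integral_const_mul, integral_id, intervalIntegral.integral_const]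
  simp only [smul_eq_mul, sub_zero]
  field_simp
  ring

theorem ofReal_sq_div_le_lintegral (hA : 0 < A) (hV : 0 ≤ V) (hμ : μ univ = ENNReal.ofReal V)
    (hg : AEMeasurable g μ) (hg_nonneg : 0 ≤ᵐ[μ] g)
    (h_sublevel : ∀ t, 0 < t → μ {x | g x ≤ t} ≤ ENNReal.ofReal (A * t)) :
    ENNReal.ofReal (V ^ 2 / (2 * A)) ≤ ∫⁻ x, ENNReal.ofReal (g x) ∂μ := by
  have h_superlevel : ∀ t ∈ Ioc 0 (V / A), ENNReal.ofReal (V - A * t) ≤ μ {x | t < g x} := by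
    intro t ht
    rw [ENNReal.ofReal_sub _ (by nlinarith [ht.1]), ← hμ]
    calc μ univ - ENNReal.ofReal (A * t) ≤ μ univ - μ {x | g x ≤ t} :=
          tsub_le_tsub_left (h_sublevel t ht.1) _
      _ ≤ μ (univ \ {x | g x ≤ t}) := le_measure_sdiff
      _ = μ {x | t < g x} := by congr 1; ext; simp
  have h_nonneg : ∀ᵐ t ∂volume.restrict (Ioc 0 (V / A)), 0 ≤ V - A * t := by
    refine (ae_restrict_iff' measurableSet_Ioc).mpr (.of_forall fun t ht => ?_)
    have := (le_div_iff₀' hA).mp ht.2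
    linarith
  calc ENNReal.ofReal (V ^ 2 / (2 * A))
      = ∫⁻ t in Ioc 0 (V / A), ENNReal.ofReal (V - A * t) := by
        rw [← integral_Ioc_sub_mul_eq hA hV, ofReal_integral_eq_lintegral_ofReal _ h_nonneg]
        exact (continuous_const.sub (continuous_const.mul continuous_id)).integrableOn_Ioc
    _ ≤ ∫⁻ t in Ioc 0 (V / A), μ {x | t < g x} :=
        setLIntegral_mono' measurableSet_Ioc h_superlevel
    _ ≤ ∫⁻ t in Ioi 0, μ {x | t < g x} := lintegral_mono_set Ioc_subset_Ioi_self
    _ = ∫⁻ x, ENNReal.ofReal (g x) ∂μ :=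
        (lintegral_eq_lintegral_meas_lt μ hg_nonneg hg).symm

theorem sq_div_le_integral (hA : 0 < A) (hV : 0 ≤ V) (hμ : μ univ = ENNReal.ofReal V)
    (hg : Integrable g μ) (hg_nonneg : 0 ≤ᵐ[μ] g)
    (h_sublevel : ∀ t, 0 < t → μ {x | g x ≤ t} ≤ ENNReal.ofReal (A * t)) :
    V ^ 2 / (2 * A) ≤ ∫ x, g x ∂μ := by
  rw [integral_eq_lintegral_of_nonneg_ae hg_nonneg hg.aestronglyMeasurable,
    ← ENNReal.toReal_ofReal (by positivity : 0 ≤ V ^ 2 / (2 * A))]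
  exact ENNReal.toReal_mono hg.lintegral_lt_top.ne
    (ofReal_sq_div_le_lintegral hA hV hμ hg.aemeasurable hg_nonneg h_sublevel)

end Bathtub

section Box

variable {ι : Type*}

theorem EuclideanSpace.volume_setOf_forall_mem [Fintype ι] (I : ι → Set ℝ) :
    volume {p : EuclideanSpace ℝ ι | ∀ k, p k ∈ I k} = ∏ k, volume (I k) := by
  rw [← volume_pi_pi, ← (EuclideanSpace.volume_preserving_symm_measurableEquiv_toLp ι)
    |>.measure_preimage_equiv]
  congr 1
  ext p
  simp [Set.mem_pi]

theorem EuclideanSpace.volume_inter_setOf_apply_mem_le [Fintype ι] [DecidableEq ι]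
    {I : ι → Set ℝ} {K : Set (EuclideanSpace ℝ ι)} (hK : K ⊆ {p | ∀ k, p k ∈ I k}) (j : ι)
    (S : Set ℝ) :
    volume (K ∩ {p | p j ∈ S}) ≤
      volume (I j ∩ S) * ∏ k ∈ Finset.univ.erase j, volume (I k) := by
  have h_sub :
      K ∩ {p | p j ∈ S} ⊆ {p | ∀ k, p k ∈ Function.update I j (I j ∩ S) k} := by
    rintro p ⟨hpK, hpS⟩ k
    rcases eq_or_ne k j with rfl | hk
    · simpa using ⟨hK hpK k, hpS⟩
    · simpa [hk] using hK hpK k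
  calc volume (K ∩ {p | p j ∈ S}) ≤ _ := measure_mono h_sub
    _ = _ := by
      rw [volume_setOf_forall_mem, ← Finset.mul_prod_erase _ _ (Finset.mem_univ j),
        Function.update_self]
      congr 1
      exact Finset.prod_congr rfl fun k hk => by
        rw [Function.update_of_ne (Finset.ne_of_mem_erase hk)]

def coordBox (l : ι → ℝ) : Set (EuclideanSpace ℝ ι) := {p | ∀ k, p k ∈ Icc 0 (l k)}

theorem isCompact_coordBox (l : ι → ℝ) : IsCompact (coordBox l) := by
  convert (PiLp.homeomorph 2 fun _ : ι => ℝ).isCompact_preimage.mpr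
    (isCompact_univ_pi fun k => isCompact_Icc (a := 0) (b := l k)) using 1
  ext p
  simp only [coordBox, mem_preimage, mem_univ_pi]
  rfl

theorem volume_coordBox [Fintype ι] {l : ι → ℝ} (hl : ∀ k, 0 ≤ l k) :
    volume (coordBox l) = ENNReal.ofReal (∏ k, l k) := by
  simp only [coordBox, EuclideanSpace.volume_setOf_forall_mem, Real.volume_Icc, sub_zero,
    ENNReal.ofReal_prod_of_nonneg fun k _ => hl k]

end Box

section Centroid

variable {ι : Type*} [Fintype ι] {l : ι → ℝ} {K : Set (EuclideanSpace ℝ ι)}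

theorem sq_div_le_setIntegral_comp_apply [DecidableEq ι] (hl : ∀ k, 0 < l k) (hK : IsCompact K)
    (hKl : K ⊆ coordBox l) (j : ι) {φ : ℝ → ℝ} (hφ : Continuous φ)
    (hφ_nonneg : ∀ y ∈ Icc 0 (l j), 0 ≤ φ y)
    (hφ_sublevel :
      ∀ t, 0 < t → volume (Icc 0 (l j) ∩ {y | φ y ≤ t}) ≤ ENNReal.ofReal t) :
    (volume K).toReal ^ 2 / (2 * ∏ k ∈ Finset.univ.erase j, l k) ≤ ∫ p in K, φ (p j) := by
  have hA : 0 < ∏ k ∈ Finset.univ.erase j, l k := Finset.prod_pos fun k _ => hl k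
  refine sq_div_le_integral hA ENNReal.toReal_nonneg ?_ ?_ ?_ fun t ht => ?_
  · rw [Measure.restrict_apply_univ, ENNReal.ofReal_toReal hK.measure_lt_top.ne]
  · exact (hφ.comp (EuclideanSpace.proj j).continuous).continuousOn.integrableOn_compact hK
  · exact ae_restrict_of_forall_mem hK.measurableSet fun p hp => hφ_nonneg _ (hKl hp j)
  rw [Measure.restrict_apply' hK.measurableSet, inter_comm]
  calc volume (K ∩ {p | p j ∈ {y | φ y ≤ t}})
      ≤ volume (Icc 0 (l j) ∩ {y | φ y ≤ t}) *
          ∏ k ∈ Finset.univ.erase j, volume (Icc 0 (l k)) :=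
        EuclideanSpace.volume_inter_setOf_apply_mem_le hKl j _
    _ ≤ ENNReal.ofReal t * ENNReal.ofReal (∏ k ∈ Finset.univ.erase j, l k) := by
        simp only [Real.volume_Icc, sub_zero, ENNReal.ofReal_prod_of_nonneg fun k _ => (hl k).le]
        exact mul_le_mul_left (hφ_sublevel t ht) _
    _ = ENNReal.ofReal ((∏ k ∈ Finset.univ.erase j, l k) * t) := by
        rw [← ENNReal.ofReal_mul ht.le, mul_comm]

theorem sq_div_le_setIntegral_apply [DecidableEq ι] (hl : ∀ k, 0 < l k) (hK : IsCompact K)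
    (hKl : K ⊆ coordBox l) (j : ι) :
    (volume K).toReal ^ 2 / (2 * ∏ k ∈ Finset.univ.erase j, l k) ≤ ∫ p in K, p j :=
  sq_div_le_setIntegral_comp_apply hl hK hKl j continuous_id (fun _ hy => hy.1) fun t _ =>
    calc volume (Icc 0 (l j) ∩ {y | y ≤ t}) ≤ volume (Icc 0 t) :=
          measure_mono fun _ hy => ⟨hy.1.1, hy.2⟩
      _ = ENNReal.ofReal t := by rw [Real.volume_Icc, sub_zero]

theorem sq_div_le_setIntegral_sub_apply [DecidableEq ι] (hl : ∀ k, 0 < l k) (hK : IsCompact K)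
    (hKl : K ⊆ coordBox l) (j : ι) :
    (volume K).toReal ^ 2 / (2 * ∏ k ∈ Finset.univ.erase j, l k) ≤ ∫ p in K, (l j - p j) :=
  sq_div_le_setIntegral_comp_apply hl hK hKl j (continuous_const.sub continuous_id)
    (fun _ hy => sub_nonneg.2 hy.2) fun t _ =>
    calc volume (Icc 0 (l j) ∩ {y | l j - y ≤ t}) ≤ volume (Icc (l j - t) (l j)) :=
          measure_mono fun y hy => ⟨by linarith [show l j - y ≤ t from hy.2], hy.1.2⟩
      _ = ENNReal.ofReal t := by rw [Real.volume_Icc, sub_sub_cancel]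

theorem centroid_apply_mem_Icc [DecidableEq ι] (hl : ∀ k, 0 < l k) (hK : IsCompact K)
    (hKl : K ⊆ coordBox l) (hV : 0 < (volume K).toReal) (j : ι) :
    ((volume K).toReal⁻¹ • ∫ p in K, p) j ∈
      Icc ((volume K).toReal * l j / (2 * (volume (coordBox l)).toReal))
        (l j - (volume K).toReal * l j / (2 * (volume (coordBox l)).toReal)) := by
  set V := (volume K).toReal
  set A := ∏ k ∈ Finset.univ.erase j, l k
  have hA : 0 < A := Finset.prod_pos fun k _ => hl k
  have h_int : IntegrableOn (fun p => p) K := continuous_id.continuousOn.integrableOn_compact hK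
  have h_coord : (V⁻¹ • ∫ p in K, p) j = V⁻¹ * ∫ p in K, p j := by
    rw [PiLp.smul_apply, smul_eq_mul]
    exact congrArg _ ((EuclideanSpace.proj j).integral_comp_comm h_int).symm
  have h_box : (volume (coordBox l)).toReal = l j * A := by
    rw [volume_coordBox fun k => (hl k).le,
      ENNReal.toReal_ofReal (Finset.prod_nonneg fun k _ => (hl k).le),
      Finset.mul_prod_erase _ _ (Finset.mem_univ j)]
  have h_reflect : ∫ p in K, (l j - p j) = l j * V - ∫ p in K, p j := by
    have h_int_j : IntegrableOn (fun p : EuclideanSpace ℝ ι => p j) K :=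
      (EuclideanSpace.proj j).continuous.continuousOn.integrableOn_compact hK
    rw [integral_sub (continuous_const.continuousOn.integrableOn_compact hK) h_int_j,
      setIntegral_const, smul_eq_mul, mul_comm]
    rfl
  have h_low := sq_div_le_setIntegral_apply hl hK hKl j
  have h_high := sq_div_le_setIntegral_sub_apply hl hK hKl j
  have h_c : V * l j / (2 * (l j * A)) = V⁻¹ * (V ^ 2 / (2 * A)) := by
    field_simp [(hl j).ne']
  rw [h_coord, h_box, h_c]
  constructor
  · exact mul_le_mul_of_nonneg_left h_low (inv_nonneg.2 hV.le)
  · calc V⁻¹ * ∫ p in K, p j ≤ V⁻¹ * (l j * V - V ^ 2 / (2 * A)) :=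
          mul_le_mul_of_nonneg_left (by linarith) (inv_nonneg.2 hV.le)
      _ = l j - V⁻¹ * (V ^ 2 / (2 * A)) := by field_simp

end Centroid

theorem laguerre_box_centroid_coordinate_bounds_general {d n : ℕ}
    (l : Fin d → ℝ) (hl : ∀ j, 0 < l j)
    (Ω : Set (EuclideanSpace ℝ (Fin d)))
    (hΩ : Ω = {p : EuclideanSpace ℝ (Fin d) | ∀ j, p j ∈ Set.Icc 0 (l j)})
    (x : Fin n → EuclideanSpace ℝ (Fin d))
    (w : Fin n → ℝ)
    (Lag : Fin n → Set (EuclideanSpace ℝ (Fin d)))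
    (hLag : ∀ i, Lag i = {p ∈ Ω | ∀ j, ‖p - x i‖ ^ 2 - w i ≤ ‖p - x j‖ ^ 2 - w j})
    (v : Fin n → ℝ) (hv : ∀ i, v i = (volume (Lag i)).toReal) (hvpos : ∀ i, 0 < v i)
    (b : Fin n → EuclideanSpace ℝ (Fin d))
    (hb : ∀ i, b i = (v i)⁻¹ • ∫ p in Lag i, p) :
    ∀ (i : Fin n) (j : Fin d),
      v i * l j / (2 * (volume Ω).toReal) ≤ b i j ∧
      b i j ≤ l j - v i * l j / (2 * (volume Ω).toReal) := by
  intro i j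
  subst hΩ
  have h_sub : Lag i ⊆ coordBox l := by
    rw [hLag i]
    exact fun p hp => hp.1
  have h_compact : IsCompact (Lag i) := by
    have h_closed : IsClosed {p | ∀ k, ‖p - x i‖ ^ 2 - w i ≤ ‖p - x k‖ ^ 2 - w k} := by
      simp only [ofPred_forall]
      exact isClosed_iInter fun k => isClosed_le (by fun_prop) (by fun_prop)
    rw [hLag i]
    exact (isCompact_coordBox l).inter_right h_closed
  rw [hb i, hv i]
  exact centroid_apply_mem_Icc hl h_compact h_sub (hv i ▸ hvpos i) j

/-- Bounds on the coordinates of the centroids of the cells of a Laguerre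
tessellation of a box `Ω = [0,l₁] × ⋯ × [0,l_d]`. -/
theorem laguerre_box_centroid_coordinate_bounds {d n : ℕ}
    (l : Fin d → ℝ) (hl : ∀ j, 0 < l j)
    (Ω : Set (EuclideanSpace ℝ (Fin d)))
    (hΩ : Ω = {p : EuclideanSpace ℝ (Fin d) | ∀ j, p j ∈ Set.Icc 0 (l j)})
    (x : Fin n → EuclideanSpace ℝ (Fin d)) (hx : Function.Injective x)
    (w : Fin n → ℝ)
    (Lag : Fin n → Set (EuclideanSpace ℝ (Fin d)))
    (hLag : ∀ i, Lag i = {p ∈ Ω | ∀ j, ‖p - x i‖ ^ 2 - w i ≤ ‖p - x j‖ ^ 2 - w j})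
    (v : Fin n → ℝ) (hv : ∀ i, v i = (volume (Lag i)).toReal) (hvpos : ∀ i, 0 < v i)
    (b : Fin n → EuclideanSpace ℝ (Fin d))
    (hb : ∀ i, b i = (v i)⁻¹ • ∫ p in Lag i, p) :
    ∀ (i : Fin n) (j : Fin d),
      v i * l j / (2 * (volume Ω).toReal) ≤ b i j ∧
      b i j ≤ l j - v i * l j / (2 * (volume Ω).toReal) :=
  laguerre_box_centroid_coordinate_bounds_general l hl Ω hΩ x w Lag hLag v hv hvpos b hb
end

section
/- Let μ be Lebesgue measure on a convex bounded set Ω ⊂ ℝ^d with vol(Ω) > 0, fix v_1,...,v_n > 0 with ∑ v_i = vol(Ω), and for X = (x_1,...,x_n) ∈ (ℝ^d)^n define F(X) = (1/2) W₂²(μ, ∑_i v_i δ_{x_i}) where W₂ is the 2-Wasserstein distance. Then the function X ↦ F(X) − (1/2)∑_i v_i |x_i|² is concave on (ℝ^d)^n. -/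
open Set MeasureTheory

/-!
For a fixed admissible assignment `φ`, expanding `‖p - X (φ p)‖²` shows that the transport cost
minus `∑ i, v i * ‖X i‖²` is `∫ p in Ω, ‖p‖² - 2 ⟪p, X (φ p)⟫`, which is affine in `X`. Hence
`F X - ½ ∑ i, v i * ‖X i‖²` is an infimum of affine functions of `X`, so it is concave. If no
admissible assignment exists, `sInf ∅ = 0` and what remains is `-½ ∑ i, v i * ‖X i‖²`, which is
concave because the weights are positive.
-/

theorem ConcaveOn.ciInf {V ι : Type*} [AddCommMonoid V] [Module ℝ V] [Nonempty ι] {s : Set V}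
    {f : ι → V → ℝ} (hf : ∀ i, ConcaveOn ℝ s (f i))
    (hbdd : ∀ x ∈ s, BddBelow (range fun i => f i x)) :
    ConcaveOn ℝ s fun x => ⨅ i, f i x := by
  refine ⟨(hf (Classical.arbitrary ι)).1, fun x hx y hy a b ha hb hab => le_ciInf fun i => ?_⟩
  calc a • (⨅ i, f i x) + b • ⨅ i, f i y ≤ a • f i x + b • f i y := by
        gcongr
        · exact ciInf_le (hbdd x hx) i
        · exact ciInf_le (hbdd y hy) i
    _ ≤ f i (a • x + b • y) := (hf i).2 hx hy ha hb hab

theorem convexOn_sum_mul_norm_sq {ι E : Type*} [Fintype ι] [SeminormedAddCommGroup E]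
    [NormedSpace ℝ E] {w : ι → ℝ} (hw : ∀ i, 0 ≤ w i) :
    ConvexOn ℝ univ fun X : ι → E => ∑ i, w i * ‖X i‖ ^ 2 := by
  have hsq (i : ι) : ConvexOn ℝ univ fun X : ι → E => ‖X i‖ ^ 2 := by
    simpa [Function.comp_def] using
      (convexOn_univ_norm.pow (fun _ _ => norm_nonneg _) 2).comp_linearMap
        (LinearMap.proj (R := ℝ) (φ := fun _ : ι => E) i)
  convert Finset.sum_induction (s := .univ) (fun i (X : ι → E) => w i * ‖X i‖ ^ 2)
    (ConvexOn ℝ univ) (fun _ _ => ConvexOn.add) (convexOn_const 0 convex_univ)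
    fun i _ => (hsq i).smul (hw i) using 1
  ext X
  simp

theorem setIntegral_comp_eq_sum {α ι G : Type*} [MeasurableSpace α] [Fintype ι]
    [MeasurableSpace ι] [MeasurableSingletonClass ι]
    [NormedAddCommGroup G] [NormedSpace ℝ G] [CompleteSpace G]
    {μ : Measure α} {Ω : Set α} (hΩ : μ Ω ≠ ⊤) {φ : α → ι} (hφ : Measurable φ) (g : ι → G) :
    ∫ p in Ω, g (φ p) ∂μ = ∑ i, μ.real (Ω ∩ φ ⁻¹' {i}) • g i := by
  have : IsFiniteMeasure (μ.restrict Ω) := isFiniteMeasure_restrict.2 hΩ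
  rw [← integral_map hφ.aemeasurable .of_discrete, integral_fintype .of_finite]
  congr 1 with i
  rw [map_measureReal_apply hφ (measurableSet_singleton i),
    measureReal_restrict_apply (hφ (measurableSet_singleton i)), inter_comm]

theorem MeasureTheory.IntegrableOn.of_isBounded_of_norm_le {α : Type*} [MetricSpace α]
    [ProperSpace α] [MeasurableSpace α] [OpensMeasurableSpace α]
    {μ : Measure α} [IsFiniteMeasureOnCompacts μ]
    {Ω : Set α} (hΩ : Bornology.IsBounded Ω) {f g : α → ℝ} (hf : AEStronglyMeasurable f μ)
    (hg : Continuous g) (hfg : ∀ p, ‖f p‖ ≤ g p) : IntegrableOn f Ω μ :=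
  ((hg.continuousOn.integrableOn_compact hΩ.isCompact_closure).mono_set subset_closure).mono'
    hf.restrict (ae_of_all _ hfg)

section ReducedCost

variable {E ι : Type*} [NormedAddCommGroup E] [InnerProductSpace ℝ E] [FiniteDimensional ℝ E]
  [MeasurableSpace E] [BorelSpace E] [Fintype ι] [MeasurableSpace ι] [DiscreteMeasurableSpace ι]
  {μ : Measure E} [IsFiniteMeasureOnCompacts μ] {Ω : Set E} {φ : E → ι}

noncomputable def reducedCost (μ : Measure E) (Ω : Set E) (φ : E → ι) (X : ι → E) : ℝ :=
  ∫ p in Ω, (‖p‖ ^ 2 - 2 * inner ℝ p (X (φ p))) ∂μ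

theorem integrableOn_reducedCost_integrand (hΩ : Bornology.IsBounded Ω) (hφ : Measurable φ)
    (X : ι → E) : IntegrableOn (fun p => ‖p‖ ^ 2 - 2 * inner ℝ p (X (φ p))) Ω μ := by
  have hXφ : Measurable fun p => X (φ p) := Measurable.of_discrete.comp hφ
  have hmeas : Measurable fun p => ‖p‖ ^ 2 - 2 * inner ℝ p (X (φ p)) :=
    (measurable_norm.pow_const 2).sub ((measurable_id.inner hXφ).const_mul 2)
  refine .of_isBounded_of_norm_le hΩ hmeas.aestronglyMeasurable
    (g := fun p => ‖p‖ ^ 2 + 2 * (‖p‖ * ‖X‖)) (by fun_prop) fun p => ?_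
  have hinner : |inner ℝ p (X (φ p))| ≤ ‖p‖ * ‖X‖ :=
    (abs_real_inner_le_norm _ _).trans (by gcongr; exact norm_le_pi_norm X (φ p))
  rw [Real.norm_eq_abs, abs_le]
  constructor <;> nlinarith [abs_le.mp hinner, sq_nonneg ‖p‖]

theorem setIntegral_norm_sub_comp_sq (hΩ : Bornology.IsBounded Ω) (hφ : Measurable φ)
    (X : ι → E) :
    ∫ p in Ω, ‖p - X (φ p)‖ ^ 2 ∂μ
      = reducedCost μ Ω φ X + ∑ i, μ.real (Ω ∩ φ ⁻¹' {i}) * ‖X i‖ ^ 2 := by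
  have hXφ : IntegrableOn (fun p => ‖X (φ p)‖ ^ 2) Ω μ :=
    .of_isBounded_of_norm_le hΩ
      ((Measurable.of_discrete.comp hφ).norm.pow_const 2).aestronglyMeasurable
      (g := fun _ => ‖X‖ ^ 2) continuous_const fun p => by
        rw [Real.norm_eq_abs, abs_of_nonneg (by positivity)]
        gcongr
        exact norm_le_pi_norm X (φ p)
  simp_rw [norm_sub_sq_real]
  rw [integral_add (integrableOn_reducedCost_integrand hΩ hφ X) hXφ,
    setIntegral_comp_eq_sum hΩ.measure_lt_top.ne hφ fun i => ‖X i‖ ^ 2]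
  simp only [reducedCost, smul_eq_mul]

theorem concaveOn_reducedCost (hΩ : Bornology.IsBounded Ω) (hφ : Measurable φ) :
    ConcaveOn ℝ univ (reducedCost μ Ω φ) := by
  refine ⟨convex_univ, fun X _ Y _ a b _ _ hab => le_of_eq ?_⟩
  simp only [reducedCost, smul_eq_mul]
  rw [← integral_const_mul, ← integral_const_mul,
    ← integral_add ((integrableOn_reducedCost_integrand hΩ hφ X).const_mul a)
      ((integrableOn_reducedCost_integrand hΩ hφ Y).const_mul b)]
  congr 1 with p
  simp only [Pi.add_apply, Pi.smul_apply, inner_add_right, real_inner_smul_right]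
  linear_combination ‖p‖ ^ 2 * hab

end ReducedCost

theorem semiconcavity_of_transport_cost_general {d n : ℕ}
    (Ω : Set (EuclideanSpace ℝ (Fin d)))
    (hbdd : Bornology.IsBounded Ω)
    (v : Fin n → ℝ) (hv : ∀ i, 0 < v i)
    (F : (Fin n → EuclideanSpace ℝ (Fin d)) → ℝ)
    (hF : ∀ X, F X = (1 / 2) * sInf {c : ℝ |
      ∃ φ : EuclideanSpace ℝ (Fin d) → Fin n, Measurable φ ∧
        (∀ i, (volume (Ω ∩ φ ⁻¹' {i})).toReal = v i) ∧
        c = ∫ p in Ω, ‖p - X (φ p)‖ ^ 2}) :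
    ConcaveOn ℝ Set.univ (fun X => F X - (1 / 2) * ∑ i, v i * ‖X i‖ ^ 2) := by
  let Adm := {φ : EuclideanSpace ℝ (Fin d) → Fin n //
    Measurable φ ∧ ∀ i, (volume (Ω ∩ φ ⁻¹' {i})).toReal = v i}
  have hF_iInf (X) : F X = (1 / 2) * ⨅ φ : Adm, ∫ p in Ω, ‖p - X (φ.1 p)‖ ^ 2 := by
    rw [hF X]
    congr 2 with c
    simp [Adm, and_assoc, eq_comm]
  rcases isEmpty_or_nonempty Adm with hAdm | hAdm
  · simp only [hF_iInf, Real.iInf_of_isEmpty, mul_zero, zero_sub]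
    exact ((convexOn_sum_mul_norm_sq fun i => (hv i).le).smul (by norm_num : (0 : ℝ) ≤ 1 / 2)).neg
  have hcost (φ : Adm) (X) : ∫ p in Ω, ‖p - X (φ.1 p)‖ ^ 2
      = reducedCost volume Ω φ.1 X + ∑ i, v i * ‖X i‖ ^ 2 := by
    simp only [setIntegral_norm_sub_comp_sq hbdd φ.2.1, measureReal_def, φ.2.2]
  have hG (X) : F X - (1 / 2) * ∑ i, v i * ‖X i‖ ^ 2
      = ⨅ φ : Adm, (1 / 2) * reducedCost volume Ω φ.1 X := by
    have hbddC : BddBelow (range fun φ : Adm => (1 / 2) * ∫ p in Ω, ‖p - X (φ.1 p)‖ ^ 2) :=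
      ⟨0, by rintro _ ⟨φ, rfl⟩; positivity⟩
    rw [hF_iInf, Real.mul_iInf_of_nonneg (by norm_num), ciInf_sub hbddC]
    congr 1 with φ
    rw [hcost]
    ring
  simp only [hG]
  refine ConcaveOn.ciInf (fun φ => (concaveOn_reducedCost hbdd φ.2.1).smul (by norm_num)) ?_
  rintro X -
  refine ⟨-(1 / 2) * ∑ i, v i * ‖X i‖ ^ 2, ?_⟩
  rintro _ ⟨φ, rfl⟩
  have hcost_nonneg : 0 ≤ ∫ p in Ω, ‖p - X (φ.1 p)‖ ^ 2 := integral_nonneg fun _ => by positivity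
  linarith [hcost φ X]

/-- Semi-concavity of the squared Wasserstein distance in the seeds:
`X ↦ F(X) − (1/2)∑ v_i |x_i|²` is concave, where `F(X)` is half the optimal
(semi-discrete) quadratic transport cost from Lebesgue measure on Ω to
`∑ v_i δ_{x_i}`, expressed as an infimum over admissible assignment maps. -/
theorem semiconcavity_of_transport_cost {d n : ℕ} (hn : 0 < n)
    (Ω : Set (EuclideanSpace ℝ (Fin d)))
    (hconv : Convex ℝ Ω) (hbdd : Bornology.IsBounded Ω)
    (hpos : 0 < (volume Ω).toReal)
    (v : Fin n → ℝ) (hv : ∀ i, 0 < v i) (hsum : ∑ i, v i = (volume Ω).toReal)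
    (F : (Fin n → EuclideanSpace ℝ (Fin d)) → ℝ)
    (hF : ∀ X, F X = (1 / 2) * sInf {c : ℝ |
      ∃ φ : EuclideanSpace ℝ (Fin d) → Fin n, Measurable φ ∧
        (∀ i, (volume (Ω ∩ φ ⁻¹' {i})).toReal = v i) ∧
        c = ∫ p in Ω, ‖p - X (φ p)‖ ^ 2}) :
    ConcaveOn ℝ Set.univ (fun X => F X - (1 / 2) * ∑ i, v i * ‖X i‖ ^ 2) :=
  semiconcavity_of_transport_cost_general Ω hbdd v hv F hF
end
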